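/- Let A : [0,∞) → ℝ be defined by A(s) = −s²·log(s²) for 0 ≤ s < e⁻³ and A(s) = 3s² + 4e⁻³·s − e⁻⁶ for s ≥ e⁻³, and let B : [0,∞) → ℝ be defined by B(0) = 0 and B(s) = s²·log(s²) + A(s) for s > 0. Then: A(s) > 0 for every s > 0, A is strictly increasing on (0,∞), and A is convex on [0,∞); moreover B(s) ≥ 0 for every s ≥ 0, B is nondecreasing on [0,∞), and B is convex on [0,∞). -/

import Mathlib

/-- The convex function `A` from Cazenave's Orlicz-space framework. -/
noncomputable def Afun (s : ℝ) : ℝ :=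
  if s < Real.exp (-3) then -(s ^ 2 * Real.log (s ^ 2))
  else 3 * s ^ 2 + 4 * Real.exp (-3) * s - Real.exp (-6)

/-- The function `B` with `B(0) = 0` and `B(s) = s² log s² + A(s)` for `s > 0`. -/
noncomputable def Bfun (s : ℝ) : ℝ :=
  if s = 0 then 0 else s ^ 2 * Real.log (s ^ 2) + Afun s



lemma c_pos : (0:ℝ) < Real.exp (-3) := Real.exp_pos _

lemma csq : Real.exp (-3) ^ 2 = Real.exp (-6) := by
  rw [sq, ← Real.exp_add]; norm_num

lemma logc2 : Real.log (Real.exp (-3) ^ 2) = -6 := by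
  rw [Real.log_pow, Real.log_exp]; norm_num

lemma log_sq_lt {x : ℝ} (hx : 0 < x) (h : x < Real.exp (-3)) : Real.log (x ^ 2) < -6 := by
  have h1 : Real.log x < -3 := by
    have := Real.log_lt_log hx h
    rwa [Real.log_exp] at this
  rw [Real.log_pow]; push_cast; linarith

lemma log_sq_ge {x : ℝ} (h : Real.exp (-3) ≤ x) : -6 ≤ Real.log (x ^ 2) := by
  have h1 : (-3:ℝ) ≤ Real.log x := by
    have := Real.log_le_log (Real.exp_pos _) h
    rwa [Real.log_exp] at this
  rw [Real.log_pow]; push_cast; linarith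

/-- junction lemma -/
lemma hasDerivAt_piecewise {f g : ℝ → ℝ} {c d : ℝ} (hv : f c = g c)
    (hf : HasDerivAt f d c) (hg : HasDerivAt g d c) :
    HasDerivAt (fun x => if x < c then f x else g x) d c := by
  have h1 : HasDerivWithinAt (fun x => if x < c then f x else g x) d (Set.Iic c) c := by
    apply hf.hasDerivWithinAt.congr
    · intro y hy
      rcases lt_or_eq_of_le (Set.mem_Iic.mp hy) with h | h
      · simp [h]
      · subst h; simp [hv]
    · simp [hv]
  have h2 : HasDerivWithinAt (fun x => if x < c then f x else g x) d (Set.Ici c) c := by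
    apply hg.hasDerivWithinAt.congr
    · intro y hy; simp [not_lt.mpr (Set.mem_Ici.mp hy)]
    · simp
  have h3 := h1.union h2
  rw [Set.Iic_union_Ici] at h3
  exact hasDerivWithinAt_univ.mp h3

lemma hasDerivAt_logsq {x : ℝ} (hx : x ≠ 0) :
    HasDerivAt (fun s : ℝ => Real.log (s ^ 2)) (2 * x / x ^ 2) x := by
  have hp : HasDerivAt (fun s : ℝ => s ^ 2) (2 * x) x := by
    simpa using hasDerivAt_pow 2 x
  simpa using hp.log (pow_ne_zero 2 hx)

lemma hasDerivAt_fA {x : ℝ} (hx : x ≠ 0) :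
    HasDerivAt (fun s : ℝ => -(s ^ 2 * Real.log (s ^ 2)))
      (-(2 * x * Real.log (x ^ 2) + 2 * x)) x := by
  have hp : HasDerivAt (fun s : ℝ => s ^ 2) (2 * x) x := by
    simpa using hasDerivAt_pow 2 x
  have := (hp.mul (hasDerivAt_logsq hx)).neg
  refine this.congr_deriv ?_
  field_simp

lemma hasDerivAt_gA (x : ℝ) :
    HasDerivAt (fun s : ℝ => 3 * s ^ 2 + 4 * Real.exp (-3) * s - Real.exp (-6))
      (6 * x + 4 * Real.exp (-3)) x := by
  have hp : HasDerivAt (fun s : ℝ => s ^ 2) (2 * x) x := by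
    simpa using hasDerivAt_pow 2 x
  have h1 := ((hp.const_mul 3).add
    ((hasDerivAt_id x).const_mul (4 * Real.exp (-3)))).sub_const (Real.exp (-6))
  simp only [id_eq] at h1
  refine h1.congr_deriv ?_; ring

lemma hasDerivAt_fA' {x : ℝ} (hx : x ≠ 0) :
    HasDerivAt (fun s : ℝ => -(2 * s * Real.log (s ^ 2) + 2 * s))
      (-(2 * Real.log (x ^ 2) + 6)) x := by
  have h1 : HasDerivAt (fun s : ℝ => 2 * s) 2 x := by
    simpa using (hasDerivAt_id x).const_mul (2:ℝ)
  have := ((h1.mul (hasDerivAt_logsq hx)).add h1).neg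
  refine this.congr_deriv ?_
  field_simp
  ring

lemma hasDerivAt_gB {x : ℝ} (hx : x ≠ 0) :
    HasDerivAt (fun s : ℝ => s ^ 2 * Real.log (s ^ 2) +
        (3 * s ^ 2 + 4 * Real.exp (-3) * s - Real.exp (-6)))
      (2 * x * Real.log (x ^ 2) + 8 * x + 4 * Real.exp (-3)) x := by
  have hp : HasDerivAt (fun s : ℝ => s ^ 2) (2 * x) x := by
    simpa using hasDerivAt_pow 2 x
  have := (hp.mul (hasDerivAt_logsq hx)).add (hasDerivAt_gA x)
  refine this.congr_deriv ?_
  field_simp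
  ring

lemma hasDerivAt_gB' {x : ℝ} (hx : x ≠ 0) :
    HasDerivAt (fun s : ℝ => 2 * s * Real.log (s ^ 2) + 8 * s + 4 * Real.exp (-3))
      (2 * Real.log (x ^ 2) + 12) x := by
  have h1 : HasDerivAt (fun s : ℝ => 2 * s) 2 x := by
    simpa using (hasDerivAt_id x).const_mul (2:ℝ)
  have h8 : HasDerivAt (fun s : ℝ => 8 * s) 8 x := by
    simpa using (hasDerivAt_id x).const_mul (8:ℝ)
  have := ((h1.mul (hasDerivAt_logsq hx)).add h8).add_const (4 * Real.exp (-3))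
  refine this.congr_deriv ?_
  field_simp
  ring

noncomputable def phiA (x : ℝ) : ℝ :=
  if x < Real.exp (-3) then -(2 * x * Real.log (x ^ 2) + 2 * x) else 6 * x + 4 * Real.exp (-3)

noncomputable def phiA2 (x : ℝ) : ℝ :=
  if x < Real.exp (-3) then -(2 * Real.log (x ^ 2) + 6) else 6

noncomputable def phiB (x : ℝ) : ℝ :=
  if x < Real.exp (-3) then 0 else 2 * x * Real.log (x ^ 2) + 8 * x + 4 * Real.exp (-3)

noncomputable def phiB2 (x : ℝ) : ℝ :=
  if x < Real.exp (-3) then 0 else 2 * Real.log (x ^ 2) + 12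

lemma Aderiv : ∀ x ∈ Set.Ioi (0:ℝ), HasDerivAt Afun (phiA x) x := by
  intro x hx
  have hx0 : (0:ℝ) < x := hx
  rcases lt_trichotomy x (Real.exp (-3)) with h | h | h
  · have hev : Afun =ᶠ[nhds x] (fun s : ℝ => -(s ^ 2 * Real.log (s ^ 2))) := by
      filter_upwards [Iio_mem_nhds h] with y hy
      simp only [Afun, if_pos (show y < Real.exp (-3) from hy)]
    rw [phiA, if_pos h]
    exact (hasDerivAt_fA hx0.ne').congr_of_eventuallyEq hev
  · subst h
    rw [phiA, if_neg (lt_irrefl _)]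
    have hv : -((Real.exp (-3)) ^ 2 * Real.log ((Real.exp (-3)) ^ 2)) =
        3 * (Real.exp (-3)) ^ 2 + 4 * Real.exp (-3) * Real.exp (-3) - Real.exp (-6) := by
      rw [logc2]; nlinarith [csq]
    have hf : HasDerivAt (fun s : ℝ => -(s ^ 2 * Real.log (s ^ 2)))
        (6 * Real.exp (-3) + 4 * Real.exp (-3)) (Real.exp (-3)) := by
      have := hasDerivAt_fA (c_pos).ne'
      convert this using 1
      rw [logc2]; ring
    have : HasDerivAt (fun s : ℝ => if s < Real.exp (-3) then -(s ^ 2 * Real.log (s ^ 2))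
        else 3 * s ^ 2 + 4 * Real.exp (-3) * s - Real.exp (-6))
        (6 * Real.exp (-3) + 4 * Real.exp (-3)) (Real.exp (-3)) :=
      hasDerivAt_piecewise hv hf (hasDerivAt_gA _)
    exact this
  · have hev : Afun =ᶠ[nhds x]
        (fun s : ℝ => 3 * s ^ 2 + 4 * Real.exp (-3) * s - Real.exp (-6)) := by
      filter_upwards [Ioi_mem_nhds h] with y hy
      simp only [Afun, if_neg (not_lt.mpr (le_of_lt (show Real.exp (-3) < y from hy)))]
    rw [phiA, if_neg (not_lt.mpr h.le)]
    exact (hasDerivAt_gA x).congr_of_eventuallyEq hev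

lemma phiAderiv : ∀ x ∈ Set.Ioi (0:ℝ), HasDerivAt phiA (phiA2 x) x := by
  intro x hx
  have hx0 : (0:ℝ) < x := hx
  rcases lt_trichotomy x (Real.exp (-3)) with h | h | h
  · have hev : phiA =ᶠ[nhds x] (fun s : ℝ => -(2 * s * Real.log (s ^ 2) + 2 * s)) := by
      filter_upwards [Iio_mem_nhds h] with y hy
      simp only [phiA, if_pos (show y < Real.exp (-3) from hy)]
    rw [phiA2, if_pos h]
    exact (hasDerivAt_fA' hx0.ne').congr_of_eventuallyEq hev
  · subst h
    rw [phiA2, if_neg (lt_irrefl _)]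
    have hv : -(2 * Real.exp (-3) * Real.log ((Real.exp (-3)) ^ 2) + 2 * Real.exp (-3)) =
        6 * Real.exp (-3) + 4 * Real.exp (-3) := by
      rw [logc2]; ring
    have hf : HasDerivAt (fun s : ℝ => -(2 * s * Real.log (s ^ 2) + 2 * s))
        (6:ℝ) (Real.exp (-3)) := by
      have := hasDerivAt_fA' (c_pos).ne'
      convert this using 1
      rw [logc2]; ring
    have hg : HasDerivAt (fun s : ℝ => 6 * s + 4 * Real.exp (-3)) (6:ℝ) (Real.exp (-3)) := by
      have := ((hasDerivAt_id (Real.exp (-3))).const_mul (6:ℝ)).add_const (4 * Real.exp (-3))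
      simpa using this
    have : HasDerivAt (fun s : ℝ => if s < Real.exp (-3)
        then -(2 * s * Real.log (s ^ 2) + 2 * s) else 6 * s + 4 * Real.exp (-3))
        (6:ℝ) (Real.exp (-3)) := hasDerivAt_piecewise hv hf hg
    exact this
  · have hev : phiA =ᶠ[nhds x] (fun s : ℝ => 6 * s + 4 * Real.exp (-3)) := by
      filter_upwards [Ioi_mem_nhds h] with y hy
      simp only [phiA, if_neg (not_lt.mpr (le_of_lt (show Real.exp (-3) < y from hy)))]
    rw [phiA2, if_neg (not_lt.mpr h.le)]
    have hg : HasDerivAt (fun s : ℝ => 6 * s + 4 * Real.exp (-3)) (6:ℝ) x := by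
      simpa using ((hasDerivAt_id x).const_mul (6:ℝ)).add_const (4 * Real.exp (-3))
    exact hg.congr_of_eventuallyEq hev

lemma B_eq_zero : ∀ y : ℝ, 0 ≤ y → y ≤ Real.exp (-3) → Bfun y = 0 := by
  intro y hy0 hyc
  rcases eq_or_lt_of_le hy0 with h | h
  · simp [Bfun, ← h]
  · rcases lt_or_eq_of_le hyc with h2 | h2
    · have hB : Bfun y = y ^ 2 * Real.log (y ^ 2) + -(y ^ 2 * Real.log (y ^ 2)) := by
        rw [Bfun, if_neg h.ne', Afun, if_pos h2]
      rw [hB]; ring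
    · subst h2
      rw [Bfun, if_neg c_pos.ne', Afun, if_neg (lt_irrefl _), logc2]
      nlinarith [csq]

lemma Bderiv : ∀ x ∈ Set.Ioi (0:ℝ), HasDerivAt Bfun (phiB x) x := by
  intro x hx
  have hx0 : (0:ℝ) < x := hx
  rcases lt_trichotomy x (Real.exp (-3)) with h | h | h
  · have hev : Bfun =ᶠ[nhds x] (fun _ : ℝ => (0:ℝ)) := by
      filter_upwards [Ioo_mem_nhds hx0 h] with y hy
      rw [B_eq_zero y hy.1.le hy.2.le]
    rw [phiB, if_pos h]
    exact (hasDerivAt_const x (0:ℝ)).congr_of_eventuallyEq hev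
  · subst h
    have h1 : HasDerivWithinAt Bfun 0 (Set.Icc 0 (Real.exp (-3))) (Real.exp (-3)) := by
      apply (hasDerivAt_const _ (0:ℝ)).hasDerivWithinAt.congr
      · intro y hy; exact B_eq_zero y hy.1 hy.2
      · exact B_eq_zero _ c_pos.le le_rfl
    have h2 : HasDerivWithinAt Bfun 0 (Set.Ici (Real.exp (-3))) (Real.exp (-3)) := by
      have hg : HasDerivAt (fun s : ℝ => s ^ 2 * Real.log (s ^ 2) +
          (3 * s ^ 2 + 4 * Real.exp (-3) * s - Real.exp (-6))) (0:ℝ) (Real.exp (-3)) := by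
        have := hasDerivAt_gB (c_pos).ne'
        convert this using 1
        rw [logc2]; ring
      apply hg.hasDerivWithinAt.congr
      · intro y hy
        have hy' : (0:ℝ) < y := lt_of_lt_of_le c_pos hy
        rw [Bfun, if_neg hy'.ne', Afun, if_neg (not_lt.mpr hy)]
      · rw [Bfun, if_neg c_pos.ne', Afun, if_neg (lt_irrefl _)]
    have h3 := h1.union h2
    rw [Set.Icc_union_Ici_eq_Ici c_pos.le] at h3
    have h4 := h3.hasDerivAt (Ici_mem_nhds c_pos)
    rw [phiB, if_neg (lt_irrefl _)]
    refine h4.congr_deriv ?_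
    rw [logc2]; ring
  · have hev : Bfun =ᶠ[nhds x] (fun s : ℝ => s ^ 2 * Real.log (s ^ 2) +
        (3 * s ^ 2 + 4 * Real.exp (-3) * s - Real.exp (-6))) := by
      filter_upwards [Ioi_mem_nhds h] with y hy
      have hy' : Real.exp (-3) < y := hy
      rw [Bfun, if_neg (lt_of_lt_of_le c_pos hy'.le).ne', Afun, if_neg (not_lt.mpr hy'.le)]
    rw [phiB, if_neg (not_lt.mpr h.le)]
    exact (hasDerivAt_gB hx0.ne').congr_of_eventuallyEq hev

lemma phiBderiv : ∀ x ∈ Set.Ioi (0:ℝ), HasDerivAt phiB (phiB2 x) x := by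
  intro x hx
  have hx0 : (0:ℝ) < x := hx
  rcases lt_trichotomy x (Real.exp (-3)) with h | h | h
  · have hev : phiB =ᶠ[nhds x] (fun _ : ℝ => (0:ℝ)) := by
      filter_upwards [Iio_mem_nhds h] with y hy
      simp only [phiB, if_pos (show y < Real.exp (-3) from hy)]
    rw [phiB2, if_pos h]
    exact (hasDerivAt_const x (0:ℝ)).congr_of_eventuallyEq hev
  · subst h
    rw [phiB2, if_neg (lt_irrefl _)]
    have hval : (2:ℝ) * Real.log ((Real.exp (-3)) ^ 2) + 12 = 0 := by rw [logc2]; ring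
    rw [hval]
    have hvv : (fun _ : ℝ => (0:ℝ)) (Real.exp (-3)) =
        2 * Real.exp (-3) * Real.log ((Real.exp (-3)) ^ 2) + 8 * Real.exp (-3)
          + 4 * Real.exp (-3) := by
      rw [logc2]; ring
    have hg : HasDerivAt (fun s : ℝ => 2 * s * Real.log (s ^ 2) + 8 * s + 4 * Real.exp (-3))
        (0:ℝ) (Real.exp (-3)) := by
      have := hasDerivAt_gB' (c_pos).ne'
      convert this using 1
      rw [logc2]; ring
    have : HasDerivAt (fun s : ℝ => if s < Real.exp (-3) then (fun _ : ℝ => (0:ℝ)) s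
        else 2 * s * Real.log (s ^ 2) + 8 * s + 4 * Real.exp (-3)) (0:ℝ) (Real.exp (-3)) :=
      hasDerivAt_piecewise hvv (hasDerivAt_const _ _) hg
    exact this
  · have hev : phiB =ᶠ[nhds x]
        (fun s : ℝ => 2 * s * Real.log (s ^ 2) + 8 * s + 4 * Real.exp (-3)) := by
      filter_upwards [Ioi_mem_nhds h] with y hy
      simp only [phiB, if_neg (not_lt.mpr (le_of_lt (show Real.exp (-3) < y from hy)))]
    rw [phiB2, if_neg (not_lt.mpr h.le)]
    exact (hasDerivAt_gB' hx0.ne').congr_of_eventuallyEq hev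

lemma contA : ContinuousOn Afun (Set.Ici 0) := by
  intro x hx
  rcases eq_or_lt_of_le (show (0:ℝ) ≤ x from hx) with h | h
  · have hf : Continuous (fun s : ℝ => -(s ^ 2 * Real.log (s ^ 2))) := by
      have := (Real.continuous_mul_log.comp (continuous_pow 2)).neg
      exact this
    have hev : Afun =ᶠ[nhds x] (fun s : ℝ => -(s ^ 2 * Real.log (s ^ 2))) := by
      filter_upwards [Iio_mem_nhds (show x < Real.exp (-3) by rw [← h]; exact c_pos)] with y hy
      simp only [Afun, if_pos (show y < Real.exp (-3) from hy)]
    exact (hf.continuousAt.congr hev.symm).continuousWithinAt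
  · exact ((Aderiv x h).differentiableAt.continuousAt).continuousWithinAt

lemma contB : ContinuousOn Bfun (Set.Ici 0) := by
  intro x hx
  rcases eq_or_lt_of_le (show (0:ℝ) ≤ x from hx) with h | h
  · have hev : ∀ᶠ y in nhdsWithin x (Set.Ici 0), Bfun y = (fun _ : ℝ => (0:ℝ)) y := by
      filter_upwards [self_mem_nhdsWithin,
        nhdsWithin_le_nhds (Iio_mem_nhds (show x < Real.exp (-3) by rw [← h]; exact c_pos))]
        with y h1 h2
      exact B_eq_zero y h1 (le_of_lt h2)
    apply (continuousWithinAt_const (b := (0:ℝ))).congr_of_eventuallyEq hev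
    rw [← h]; exact B_eq_zero 0 le_rfl c_pos.le
  · exact ((Bderiv x h).differentiableAt.continuousAt).continuousWithinAt

lemma derivA2 : ∀ x ∈ Set.Ioi (0:ℝ), HasDerivAt (deriv Afun) (phiA2 x) x := by
  intro x hx
  have hev : deriv Afun =ᶠ[nhds x] phiA := by
    filter_upwards [Ioi_mem_nhds (show (0:ℝ) < x from hx)] with y hy
    exact (Aderiv y hy).deriv
  exact (phiAderiv x hx).congr_of_eventuallyEq hev

lemma derivB2 : ∀ x ∈ Set.Ioi (0:ℝ), HasDerivAt (deriv Bfun) (phiB2 x) x := by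
  intro x hx
  have hev : deriv Bfun =ᶠ[nhds x] phiB := by
    filter_upwards [Ioi_mem_nhds (show (0:ℝ) < x from hx)] with y hy
    exact (Bderiv y hy).deriv
  exact (phiBderiv x hx).congr_of_eventuallyEq hev

lemma convexA : ConvexOn ℝ (Set.Ici 0) Afun := by
  apply convexOn_of_deriv2_nonneg (convex_Ici 0) contA
  · rw [interior_Ici]
    exact fun x hx => (Aderiv x hx).differentiableAt.differentiableWithinAt
  · rw [interior_Ici]
    exact fun x hx => (derivA2 x hx).differentiableAt.differentiableWithinAt
  · rw [interior_Ici]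
    intro x hx
    have h2 : deriv^[2] Afun x = deriv (deriv Afun) x := rfl
    rw [h2, (derivA2 x hx).deriv, phiA2]
    split_ifs with h
    · have := log_sq_lt (show (0:ℝ) < x from hx) h
      linarith
    · norm_num

lemma convexB : ConvexOn ℝ (Set.Ici 0) Bfun := by
  apply convexOn_of_deriv2_nonneg (convex_Ici 0) contB
  · rw [interior_Ici]
    exact fun x hx => (Bderiv x hx).differentiableAt.differentiableWithinAt
  · rw [interior_Ici]
    exact fun x hx => (derivB2 x hx).differentiableAt.differentiableWithinAt
  · rw [interior_Ici]
    intro x hx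
    have h2 : deriv^[2] Bfun x = deriv (deriv Bfun) x := rfl
    rw [h2, (derivB2 x hx).deriv, phiB2]
    split_ifs with h
    · exact le_refl 0
    · have := log_sq_ge (not_lt.mp h)
      linarith

lemma Apos : ∀ s : ℝ, 0 < s → 0 < Afun s := by
  intro s hs
  rw [Afun]
  split_ifs with h
  · have hl := log_sq_lt hs h
    nlinarith [pow_pos hs 2]
  · push_neg at h
    nlinarith [csq, sq_nonneg s, mul_pos c_pos c_pos, mul_le_mul_of_nonneg_left h c_pos.le]

lemma monoA : StrictMonoOn Afun (Set.Ioi 0) := by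
  apply strictMonoOn_of_deriv_pos (convex_Ioi 0) (contA.mono Set.Ioi_subset_Ici_self)
  rw [interior_Ioi]
  intro x hx
  have hx0 : (0:ℝ) < x := hx
  rw [(Aderiv x hx).deriv, phiA]
  split_ifs with h
  · have hl := log_sq_lt hx0 h
    nlinarith
  · nlinarith [c_pos]

lemma Bnonneg : ∀ s : ℝ, 0 ≤ s → 0 ≤ Bfun s := by
  intro s hs
  rcases le_or_gt s (Real.exp (-3)) with h | h
  · rw [B_eq_zero s hs h]
  · have hs0 : (0:ℝ) < s := c_pos.trans h
    set t : ℝ := Real.exp (-3) / s with ht_def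
    have ht : 0 < t := div_pos c_pos hs0
    have ht1 : t < 1 := (div_lt_one hs0).mpr h
    have key := convexB.2 (Set.self_mem_Ici (a := (0:ℝ))) (Set.mem_Ici.mpr hs0.le)
      (show (0:ℝ) ≤ 1 - t by linarith) ht.le (by ring)
    simp only [smul_eq_mul, mul_zero, zero_add] at key
    rw [show t * s = Real.exp (-3) from div_mul_cancel₀ _ hs0.ne',
      B_eq_zero _ c_pos.le le_rfl, B_eq_zero 0 le_rfl c_pos.le, mul_zero, zero_add] at key
    nlinarith [key, ht]

lemma monoB : MonotoneOn Bfun (Set.Ici 0) := by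
  intro x hx y hy hxy
  rcases le_or_gt x (Real.exp (-3)) with h | h
  · rw [B_eq_zero x hx h]
    exact Bnonneg y hy
  · rcases eq_or_lt_of_le hxy with h2 | h2
    · rw [h2]
    · have hx0 : (0:ℝ) < x := c_pos.trans h
      have hs := convexB.slope_mono_adjacent (Set.self_mem_Ici (a := (0:ℝ)))
        (Set.mem_Ici.mpr (hx0.trans h2).le) hx0 h2
      rw [B_eq_zero 0 le_rfl c_pos.le] at hs
      have h1 : 0 ≤ (Bfun x - 0) / (x - 0) :=
        div_nonneg (by linarith [Bnonneg x hx]) (by linarith)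
      have h3 : 0 ≤ (Bfun y - Bfun x) / (y - x) := le_trans h1 hs
      rcases div_nonneg_iff.mp h3 with ⟨h4, _⟩ | ⟨_, h5⟩
      · linarith
      · linarith

theorem stmt0 :
    (∀ s : ℝ, 0 < s → 0 < Afun s) ∧
    StrictMonoOn Afun (Set.Ioi 0) ∧
    ConvexOn ℝ (Set.Ici 0) Afun ∧
    (∀ s : ℝ, 0 ≤ s → 0 ≤ Bfun s) ∧
    MonotoneOn Bfun (Set.Ici 0) ∧
    ConvexOn ℝ (Set.Ici 0) Bfun :=
  ⟨Apos, monoA, convexA, Bnonneg, monoB, convexB⟩
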